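/- arXiv:2404.16741 — 4 statements merged into one kernel-verified Lean document; each statement's English description precedes it below -/
import Mathlib

section
/- Let (D,K,T) be an MD-RSPP instance such that every commodity (s,t) ∈ K satisfies s ≠ t and t is reachable from s by a directed path in D. If T is at least the maximum outdegree of D, or if T is at least the maximum, over all vertices v of D, of the number of commodities in K whose source is v, then (D,K,T) is a YES-instance of MD-RSPP. -/
/-!
Either `H = D` works, since every walk in `D` shortens to a simple path, or `H = K` works,
since each commodity `(s,t)` is itself an edge of `T(D)` and so is routed along a single edge.
-/

open Relation

variable {V : Type*} [DecidableEq V]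

/-- The adjacency relation of a digraph given by its edge set. -/
def Adj (E : Finset (V × V)) : V → V → Prop := fun a b => (a, b) ∈ E

/-- `D` is a digraph: no self-loops (no parallel edges since edges form a set). -/
def IsDigraph (D : Finset (V × V)) : Prop := ∀ e ∈ D, e.1 ≠ e.2

/-- `l` is a directed `s`-`t`-path w.r.t. the adjacency relation `A`:
a nonempty duplicate-free list of vertices, consecutive ones adjacent,
starting at `s` and ending at `t`. -/
def DiPath (A : V → V → Prop) (s t : V) (l : List V) : Prop :=
  l.Chain' A ∧ l.Nodup ∧ l.head? = some s ∧ l.getLast? = some t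

/-- Adjacency in the transitive closure `T(D)` of the digraph with edge set `E`:
`(u,v)` is an edge iff `u ≠ v` and `v` is reachable from `u` in `E`. -/
def TCAdj (E : Finset (V × V)) (u v : V) : Prop :=
  u ≠ v ∧ Relation.ReflTransGen (Adj E) u v

/-- The outdegree of `v` in the digraph with edge set `H`. -/
def outDeg (H : Finset (V × V)) (v : V) : ℕ :=
  (H.filter fun e => e.1 = v).card

/-- The list of (directed) edges traversed by a list of vertices. -/
def listEdges (l : List V) : List (V × V) := l.zip l.tail

/-- `H` is a solution graph of the MD-RSPP instance `(D,K,T)`: a subgraph of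
`T(D)` of maximum outdegree at most `T` containing a directed `s`-`t`-path for
every commodity `(s,t) ∈ K`. -/
def RSPPSolution (D K : Finset (V × V)) (T : ℕ) (H : Finset (V × V)) : Prop :=
  (∀ e ∈ H, TCAdj D e.1 e.2) ∧ (∀ v, outDeg H v ≤ T) ∧
  (∀ k ∈ K, ∃ l, DiPath (Adj H) k.1 k.2 l)

section DiPath

variable {α : Type*} {A : α → α → Prop} {s t : α} {l : List α}

theorem diPath_singleton (s : α) : DiPath A s s [s] :=
  ⟨List.isChain_singleton s, List.nodup_singleton s, rfl, rfl⟩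

theorem diPath_pair (hne : s ≠ t) (h : A s t) : DiPath A s t [s, t] :=
  ⟨List.isChain_pair.mpr h, by simpa using hne, rfl, rfl⟩

/-- If `a` already lies on the path, cut the path at `a` instead of prepending it. -/
theorem DiPath.exists_of_adj {a : α} (ha : A a s) (hl : DiPath A s t l) :
    ∃ l', DiPath A a t l' := by
  obtain ⟨hc, hn, hh, ht⟩ := hl
  by_cases hmem : a ∈ l
  · obtain ⟨l₁, l₂, rfl⟩ := List.append_of_mem hmem
    refine ⟨a :: l₂, (List.isChain_append.mp hc).2.1,
      hn.sublist (List.sublist_append_right l₁ _), rfl, ?_⟩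
    rwa [List.getLast?_append_of_ne_nil _ (List.cons_ne_nil a l₂)] at ht
  · obtain ⟨x, xs, rfl⟩ := List.exists_cons_of_ne_nil (l := l) (by rintro rfl; simp at hh)
    obtain rfl : x = s := by simpa using hh
    exact ⟨a :: x :: xs, List.IsChain.cons_cons ha hc, List.nodup_cons.mpr ⟨hmem, hn⟩, rfl,
      by rwa [List.getLast?_cons_cons]⟩

theorem exists_diPath_of_reflTransGen (h : ReflTransGen A s t) : ∃ l, DiPath A s t l := by
  induction h using ReflTransGen.head_induction_on with
  | refl => exact ⟨[t], diPath_singleton t⟩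
  | head hab _ ih =>
    obtain ⟨l, hl⟩ := ih
    exact hl.exists_of_adj hab

end DiPath

section Solution

variable (D K : Finset (V × V)) (T : ℕ)

theorem rsppSolution_self (hD : IsDigraph D) (hK : ∀ k ∈ K, ReflTransGen (Adj D) k.1 k.2)
    (hT : ∀ v, outDeg D v ≤ T) : RSPPSolution D K T D :=
  ⟨fun e he => ⟨hD e he, .single he⟩, hT, fun k hk => exists_diPath_of_reflTransGen (hK k hk)⟩

theorem rsppSolution_commodities (hK : ∀ k ∈ K, TCAdj D k.1 k.2) (hT : ∀ v, outDeg K v ≤ T) :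
    RSPPSolution D K T K :=
  ⟨hK, hT, fun k hk => ⟨[k.1, k.2], diPath_pair (hK k hk).1 hk⟩⟩

end Solution

theorem mdrspp_trivial_yes_general {V : Type*} [DecidableEq V]
    (D K : Finset (V × V)) (T : ℕ)
    (hD : IsDigraph D)
    (hK : ∀ k ∈ K, k.1 ≠ k.2 ∧ Relation.ReflTransGen (Adj D) k.1 k.2)
    (hT : (∀ v, outDeg D v ≤ T) ∨ (∀ v, (K.filter fun k => k.1 = v).card ≤ T)) :
    ∃ H : Finset (V × V), RSPPSolution D K T H := by
  rcases hT with hT | hT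
  · exact ⟨D, rsppSolution_self D K T hD (fun k hk => (hK k hk).2) hT⟩
  · exact ⟨K, rsppSolution_commodities D K T hK hT⟩

/-- If every commodity `(s,t) ∈ K` satisfies `s ≠ t` and `t` is
reachable from `s` in `D`, and `T` is at least the maximum outdegree of `D` or
at least the maximum number of commodities sharing a source, then `(D,K,T)` is
a YES-instance of MD-RSPP. -/
theorem mdrspp_trivial_yes {V : Type*} [Fintype V] [DecidableEq V]
    (D K : Finset (V × V)) (T : ℕ)
    (hD : IsDigraph D)
    (hK : ∀ k ∈ K, k.1 ≠ k.2 ∧ Relation.ReflTransGen (Adj D) k.1 k.2)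
    (hT : (∀ v, outDeg D v ≤ T) ∨ (∀ v, (K.filter fun k => k.1 = v).card ≤ T)) :
    ∃ H : Finset (V × V), RSPPSolution D K T H :=
  mdrspp_trivial_yes_general D K T hD hK hT
end

section
/- Every YES-instance (D,K,T) of MD-RSPP has a solution path cover whose union contains at most 2^{|K|} + |K| distinct vertices. -/
open Relation

variable {V : Type*} [DecidableEq V]

/-! Take a solution path cover of minimal total length. If two vertices that are no commodity's
target lay on exactly the same paths, each of these paths could jump from the earlier of the two
to the successor of the later one. This shortens the cover, and afterwards the out-neighbours of
each of the two vertices are among the old out-neighbours of the other, so the degree bound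
survives. Hence the non-target vertices are told apart by the sets of commodities whose paths
contain them: there are at most `2^|K|` of them, besides at most `|K|` targets. -/

section Paths

variable {α : Type*}

lemma listEdges_cons_cons (x y : α) (l : List α) :
    listEdges (x :: y :: l) = (x, y) :: listEdges (y :: l) := rfl

lemma listEdges_append_cons : ∀ (l : List α) (x : α) (l' : List α),
    listEdges (l ++ x :: l') = listEdges (l ++ [x]) ++ listEdges (x :: l')
  | [], _, _ => rfl
  | [_], _, _ => rfl
  | a :: b :: l, x, l' => by
    have ih := listEdges_append_cons (b :: l) x l'
    simp only [List.cons_append] at ih ⊢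
    rw [listEdges_cons_cons, ih, listEdges_cons_cons, List.cons_append]

lemma fst_mem_of_mem_listEdges {l : List α} {e : α × α} (he : e ∈ listEdges l) : e.1 ∈ l :=
  (List.of_mem_zip he).1

lemma fst_mem_of_mem_listEdges_append_singleton {l : List α} {x : α} {e : α × α}
    (he : e ∈ listEdges (l ++ [x])) : e.1 ∈ l := by
  have hzip : listEdges (l ++ [x]) = l.zip (l ++ [x]).tail := by
    cases l with
    | nil => rfl
    | cons a l =>
      simpa [listEdges] using
        List.zip_append (l₁ := a :: l) (r₁ := [x]) (l₂ := l ++ [x]) (r₂ := []) (by simp)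
  rw [hzip] at he
  exact (List.of_mem_zip he).1

lemma isChain_iff_forall_mem_listEdges {R : α → α → Prop} :
    ∀ {l : List α}, l.IsChain R ↔ ∀ e ∈ listEdges l, R e.1 e.2
  | [] => by simp [listEdges]
  | [_] => by simp [listEdges]
  | x :: y :: l => by
    rw [List.isChain_cons_cons, isChain_iff_forall_mem_listEdges, listEdges_cons_cons]
    simp

variable {D : Finset (α × α)} {s t : α}

lemma isChain_tcAdj_iff {l : List α} (hl : l.Nodup) :
    l.IsChain (TCAdj D) ↔ l.IsChain (ReflTransGen (Adj D)) := by
  refine ⟨List.IsChain.imp fun _ _ h => h.2, fun h => ?_⟩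
  have hne : l.IsChain (· ≠ ·) := (List.nodup_iff_pairwise_ne.1 hl).isChain
  rw [isChain_iff_forall_mem_listEdges] at h hne ⊢
  exact fun e he => ⟨hne e he, h e he⟩

lemma DiPath.of_sublist {l l' : List α} (hl : DiPath (TCAdj D) s t l) (h : l'.Sublist l)
    (hhead : l'.head? = l.head?) (hlast : l'.getLast? = l.getLast?) :
    DiPath (TCAdj D) s t l' := by
  obtain ⟨hchain, hnodup, hs, ht⟩ := hl
  have hnodup' := hnodup.sublist h
  refine ⟨?_, hnodup', hhead.trans hs, hlast.trans ht⟩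
  exact (isChain_tcAdj_iff hnodup').2 (((isChain_tcAdj_iff hnodup).1 hchain).sublist h)

end Paths

section Shortcut

variable {α : Type*} [DecidableEq α] {D : Finset (α × α)} {s t : α}

lemma DiPath.exists_shortcut_of_append {A B : List α} {x y : α}
    (hl : DiPath (TCAdj D) s t (A ++ x :: B)) (hy : y ∈ B) (hyt : y ≠ t) :
    ∃ l', DiPath (TCAdj D) s t l' ∧ l'.length < (A ++ x :: B).length ∧
      ∀ e ∈ listEdges l', (Equiv.swap x y e.1, e.2) ∈ listEdges (A ++ x :: B) := by
  obtain ⟨M, Z, rfl⟩ := List.append_of_mem hy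
  obtain ⟨c, C, rfl⟩ : ∃ c C, Z = c :: C := by
    refine List.exists_cons_of_ne_nil fun hZ => hyt ?_
    have hlast := hl.2.2.2
    rw [hZ, show A ++ x :: (M ++ [y]) = (A ++ x :: M) ++ [y] by simp,
      List.getLast?_concat] at hlast
    exact Option.some_injective _ hlast
  have hnodup := hl.2.1
  simp only [List.nodup_append, List.nodup_cons, List.mem_append, List.mem_cons] at hnodup
  have hA : ∀ z ∈ A, z ≠ x ∧ z ≠ y := fun z hz =>
    ⟨hnodup.2.2 z hz x (by simp), hnodup.2.2 z hz y (by simp)⟩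
  have hC : ∀ z ∈ c :: C, z ≠ x ∧ z ≠ y := by grind
  have hedges : listEdges (A ++ x :: (M ++ y :: c :: C)) =
      listEdges (A ++ [x]) ++ (listEdges (x :: M ++ [y]) ++ (y, c) :: listEdges (c :: C)) := by
    rw [listEdges_append_cons, ← List.cons_append, listEdges_append_cons (x :: M),
      listEdges_cons_cons]
  refine ⟨A ++ x :: c :: C, hl.of_sublist (by simp) (by cases A <;> rfl) (by grind), by simp,
    fun e he => ?_⟩
  rw [listEdges_append_cons, listEdges_cons_cons] at he
  rw [hedges]
  simp only [List.mem_append, List.mem_cons] at he ⊢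
  rcases he with he | rfl | he
  · obtain ⟨hex, hey⟩ := hA _ (fst_mem_of_mem_listEdges_append_singleton he)
    rw [Equiv.swap_apply_of_ne_of_ne hex hey]
    exact Or.inl he
  · simp
  · obtain ⟨hex, hey⟩ := hC _ (fst_mem_of_mem_listEdges he)
    rw [Equiv.swap_apply_of_ne_of_ne hex hey]
    simp [he]

lemma DiPath.exists_shortcut {l : List α} {u v : α} (hl : DiPath (TCAdj D) s t l)
    (hu : u ∈ l) (hv : v ∈ l) (huv : u ≠ v) (hut : u ≠ t) (hvt : v ≠ t) :
    ∃ l', DiPath (TCAdj D) s t l' ∧ l'.length < l.length ∧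
      ∀ e ∈ listEdges l', (Equiv.swap u v e.1, e.2) ∈ listEdges l := by
  obtain ⟨A, B, rfl⟩ := List.append_of_mem hu
  rcases List.mem_append.1 hv with hvA | hvB
  · obtain ⟨A', M, rfl⟩ := List.append_of_mem hvA
    have hl' : DiPath (TCAdj D) s t (A' ++ v :: (M ++ u :: B)) := by simpa using hl
    rw [Equiv.swap_comm]
    simpa using hl'.exists_shortcut_of_append (y := u) (by simp) hut
  · exact hl.exists_shortcut_of_append ((List.mem_cons.1 hvB).resolve_left huv.symm) hvt

end Shortcut

section PathCover

variable {α : Type*} [DecidableEq α] {D K : Finset (α × α)} {T : ℕ}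
  {Q : α × α → List α}

lemma outDeg_le_outDeg_of_forall_mem {H H' : Finset (α × α)} (f : α → α)
    (h : ∀ e ∈ H', (f e.1, e.2) ∈ H) (v : α) : outDeg H' v ≤ outDeg H (f v) := by
  refine Finset.card_le_card_of_injOn (fun e => (f e.1, e.2)) (fun e he => ?_)
    fun e he e' he' hee' => ?_
  · simp only [Finset.coe_filter, Set.mem_ofPred_eq] at he ⊢
    exact ⟨h e he.1, congrArg f he.2⟩
  · simp only [Finset.coe_filter, Set.mem_ofPred_eq] at he he'
    exact Prod.ext (he.2.trans he'.2.symm) (Prod.ext_iff.1 hee').2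

def pathEdges (K : Finset (α × α)) (Q : α × α → List α) : Finset (α × α) :=
  K.biUnion fun k => (listEdges (Q k)).toFinset

def pathVertices (K : Finset (α × α)) (Q : α × α → List α) : Finset α :=
  K.biUnion fun k => (Q k).toFinset

def totalLength (K : Finset (α × α)) (Q : α × α → List α) : ℕ :=
  ∑ k ∈ K, (Q k).length

def IsSolutionPathCover (D K : Finset (α × α)) (T : ℕ) (Q : α × α → List α) : Prop :=
  (∀ k ∈ K, DiPath (TCAdj D) k.1 k.2 (Q k)) ∧ ∀ v, outDeg (pathEdges K Q) v ≤ T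

lemma RSPPSolution.exists_isSolutionPathCover {H : Finset (α × α)} (hH : RSPPSolution D K T H) :
    ∃ Q, IsSolutionPathCover D K T Q := by
  obtain ⟨hHD, hdeg, hpath⟩ := hH
  choose! Q hQ using hpath
  have hQH : pathEdges K Q ⊆ H := fun e he => by
    obtain ⟨k, hk, he⟩ := Finset.mem_biUnion.1 he
    exact isChain_iff_forall_mem_listEdges.1 (hQ k hk).1 e (List.mem_toFinset.1 he)
  refine ⟨Q, fun k hk => ?_, fun v =>
    (Finset.card_le_card (Finset.filter_subset_filter _ hQH)).trans (hdeg v)⟩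
  obtain ⟨hchain, hrest⟩ := hQ k hk
  exact ⟨List.IsChain.imp (fun a b hab => hHD (a, b) hab) hchain, hrest⟩

lemma IsSolutionPathCover.rsppSolution (hQ : IsSolutionPathCover D K T Q) :
    RSPPSolution D K T (pathEdges K Q) := by
  refine ⟨fun e he => ?_, hQ.2, fun k hk => ⟨Q k, ?_, (hQ.1 k hk).2⟩⟩
  · obtain ⟨k, hk, he⟩ := Finset.mem_biUnion.1 he
    exact isChain_iff_forall_mem_listEdges.1 (hQ.1 k hk).1 e (List.mem_toFinset.1 he)
  · exact isChain_iff_forall_mem_listEdges.2 fun e he =>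
      Finset.mem_biUnion.2 ⟨k, hk, List.mem_toFinset.2 he⟩

lemma IsSolutionPathCover.exists_totalLength_lt (hQ : IsSolutionPathCover D K T Q) {u v : α}
    (hu : u ∈ pathVertices K Q) (huv : u ≠ v) (hut : u ∉ K.image Prod.snd)
    (hvt : v ∉ K.image Prod.snd) (hsig : K.filter (u ∈ Q ·) = K.filter (v ∈ Q ·)) :
    ∃ Q', IsSolutionPathCover D K T Q' ∧ totalLength K Q' < totalLength K Q := by
  have hsig' : ∀ k ∈ K, u ∈ Q k ↔ v ∈ Q k := fun k hk => by
    simpa [hk] using congrArg (k ∈ ·) hsig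
  have hnew : ∀ k ∈ K, ∃ l, DiPath (TCAdj D) k.1 k.2 l ∧ l.length ≤ (Q k).length ∧
      (u ∈ Q k → l.length < (Q k).length) ∧
      ∀ e ∈ listEdges l, (Equiv.swap u v e.1, e.2) ∈ listEdges (Q k) := by
    intro k hk
    by_cases huk : u ∈ Q k
    · obtain ⟨l, hl, hlt, hedges⟩ := (hQ.1 k hk).exists_shortcut huk ((hsig' k hk).1 huk) huv
        (fun h => hut (Finset.mem_image.2 ⟨k, hk, h.symm⟩))
        (fun h => hvt (Finset.mem_image.2 ⟨k, hk, h.symm⟩))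
      exact ⟨l, hl, hlt.le, fun _ => hlt, hedges⟩
    · refine ⟨Q k, hQ.1 k hk, le_rfl, (absurd · huk), fun e he => ?_⟩
      have hek := fst_mem_of_mem_listEdges he
      rwa [Equiv.swap_apply_of_ne_of_ne (ne_of_mem_of_not_mem hek huk)
        (ne_of_mem_of_not_mem hek (mt (hsig' k hk).2 huk))]
  choose! Q' hQ' using hnew
  have hmaps : ∀ e ∈ pathEdges K Q', (Equiv.swap u v e.1, e.2) ∈ pathEdges K Q := by
    intro e he
    obtain ⟨k, hk, he⟩ := Finset.mem_biUnion.1 he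
    exact Finset.mem_biUnion.2
      ⟨k, hk, List.mem_toFinset.2 ((hQ' k hk).2.2.2 e (List.mem_toFinset.1 he))⟩
  obtain ⟨k, hk, huk⟩ := Finset.mem_biUnion.1 hu
  refine ⟨Q', ⟨fun k hk => (hQ' k hk).1, fun w => ?_⟩, ?_⟩
  · exact (outDeg_le_outDeg_of_forall_mem _ hmaps w).trans (hQ.2 _)
  · exact Finset.sum_lt_sum (fun k hk => (hQ' k hk).2.1)
      ⟨k, hk, (hQ' k hk).2.2.1 (List.mem_toFinset.1 huk)⟩

lemma card_le_two_pow_add_card {β : Type*} {W L : Finset α} {S : Finset β} (f : α → Finset β)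
    (hf : ∀ x, f x ⊆ S) (hinj : Set.InjOn f ↑(W \ L)) : W.card ≤ 2 ^ S.card + L.card :=
  calc W.card ≤ (W \ L).card + L.card := Finset.card_le_card_sdiff_add_card
    _ ≤ S.powerset.card + L.card := by
      gcongr
      exact Finset.card_le_card_of_injOn f (fun x _ => Finset.mem_powerset.2 (hf x)) hinj
    _ = 2 ^ S.card + L.card := by rw [Finset.card_powerset]

end PathCover

theorem mdrspp_small_solution_path_cover_general {V : Type*} [DecidableEq V]
    (D K : Finset (V × V)) (T : ℕ)
    (hyes : ∃ H : Finset (V × V), RSPPSolution D K T H) :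
    ∃ Q : V × V → List V,
      (∀ k ∈ K, DiPath (TCAdj D) k.1 k.2 (Q k)) ∧
      RSPPSolution D K T (K.biUnion fun k => (listEdges (Q k)).toFinset) ∧
      (K.biUnion fun k => (Q k).toFinset).card ≤ 2 ^ K.card + K.card := by
  obtain ⟨H, hH⟩ := hyes
  obtain ⟨Q, hQ, hmin⟩ := (measure (totalLength K)).wf.has_min
    {Q | IsSolutionPathCover D K T Q} hH.exists_isSolutionPathCover
  have hinj :
      Set.InjOn (fun x => K.filter (x ∈ Q ·)) ↑(pathVertices K Q \ K.image Prod.snd) := by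
    intro u hu v hv hsig
    simp only [Finset.coe_sdiff, Set.mem_sdiff, Finset.mem_coe] at hu hv
    by_contra huv
    obtain ⟨Q', hQ', hlt⟩ := hQ.exists_totalLength_lt hu.1 huv hu.2 hv.2 hsig
    exact hmin Q' hQ' hlt
  refine ⟨Q, hQ.1, hQ.rsppSolution, ?_⟩
  calc (pathVertices K Q).card ≤ 2 ^ K.card + (K.image Prod.snd).card :=
        card_le_two_pow_add_card _ (fun x => Finset.filter_subset _ K) hinj
    _ ≤ 2 ^ K.card + K.card := by grw [Finset.card_image_le]

/-- Every YES-instance `(D,K,T)` of MD-RSPP has a solution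
path cover (a family `Q` of witness paths, one per commodity, i.e. directed
paths in `T(D)`, whose union is a solution graph) whose union contains at most
`2^|K| + |K|` distinct vertices. -/
theorem mdrspp_small_solution_path_cover {V : Type*} [Fintype V] [DecidableEq V]
    (D K : Finset (V × V)) (T : ℕ)
    (hD : IsDigraph D)
    (hyes : ∃ H : Finset (V × V), RSPPSolution D K T H) :
    ∃ Q : V × V → List V,
      (∀ k ∈ K, DiPath (TCAdj D) k.1 k.2 (Q k)) ∧
      RSPPSolution D K T (K.biUnion fun k => (listEdges (Q k)).toFinset) ∧
      (K.biUnion fun k => (Q k).toFinset).card ≤ 2 ^ K.card + K.card :=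
  mdrspp_small_solution_path_cover_general D K T hyes
end

section
/- Let (D,K,1) be a YES-instance of MD-SPP with target T = 1. Then there exists a solution graph H of (D,K,1) such that every vertex incident to an edge of H is the source or the destination of some routed commodity in K. -/
open Relation

variable {V : Type*} [DecidableEq V]

/-- The routed commodities in `K` are valid: for `(s,t,P) ∈ K`,
`P` is a directed `s`-`t`-path in `D`. -/
def ValidSPP (D : Finset (V × V)) (K : Finset (V × V × List V)) : Prop :=
  ∀ k ∈ K, DiPath (Adj D) k.1 k.2.1 k.2.2

/-- `H` is a solution graph of the MD-SPP instance `(D,K,T)`: a subgraph of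
`T(D)` of maximum outdegree at most `T` such that every routed commodity
`(s,t,P) ∈ K` has a directed `s`-`t`-path in `H ∩ T(P)`, i.e. an `s`-`t`-path
whose edges are in `H` and whose vertices lie on `P` in the same order
(a sublist of `P`). -/
def SPPSolution (D : Finset (V × V)) (K : Finset (V × V × List V)) (T : ℕ)
    (H : Finset (V × V)) : Prop :=
  (∀ e ∈ H, TCAdj D e.1 e.2) ∧ (∀ v, outDeg H v ≤ T) ∧
  (∀ k ∈ K, ∃ l, DiPath (Adj H) k.1 k.2.1 l ∧ l.Sublist k.2.2)

/-!
With target `1` a solution graph `H` is functional: every vertex has at most one out-neighbour,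
so the walk in `H` leaving a vertex is determined by that vertex. Fix an `H`-path for each
commodity and keep only its vertices that are endpoints of commodities; joining consecutive kept
vertices gives the new graph. Its edges are still in `T(D)` and each commodity is routed along
its kept vertices. An edge `(u, w)` of the new graph means that `w` is the first endpoint after
`u` on the unique `H`-walk from `u`, so the new graph is functional too.
-/

namespace List

variable {α : Type*}

theorem mem_listEdges_iff [DecidableEq α] {l : List α} {a b : α} :
    (a, b) ∈ listEdges l ↔ ∃ l₁ l₂, l = l₁ ++ a :: b :: l₂ := by
  induction l with
  | nil => simp [listEdges]
  | cons x l ih =>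
    cases l with
    | nil => simp [listEdges, cons_eq_append_iff]
    | cons y l =>
      rw [show listEdges (x :: y :: l) = (x, y) :: listEdges (y :: l) from rfl, mem_cons, ih]
      constructor
      · rintro (h | ⟨l₁, l₂, h⟩)
        · obtain ⟨rfl, rfl⟩ := Prod.mk.inj h
          exact ⟨[], l, rfl⟩
        · exact ⟨x :: l₁, l₂, by rw [h, cons_append]⟩
      · rintro ⟨_ | ⟨z, l₁⟩, l₂, h⟩
        · simp_all
        · exact Or.inr ⟨l₁, l₂, (cons.inj h).2⟩

theorem isChain_iff_forall_mem_listEdges [DecidableEq α] {R : α → α → Prop} {l : List α} :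
    l.IsChain R ↔ ∀ a b, (a, b) ∈ listEdges l → R a b := by
  simp only [isChain_iff_forall_rel_of_append_cons_cons, mem_listEdges_iff]
  grind

theorem ne_of_mem_listEdges [DecidableEq α] {l : List α} {a b : α} (hl : l.Nodup)
    (h : (a, b) ∈ listEdges l) : a ≠ b := by
  obtain ⟨l₁, l₂, rfl⟩ := mem_listEdges_iff.mp h
  rintro rfl
  simp [nodup_append] at hl

theorem exists_eq_append_of_filter_eq_append_cons_cons {p : α → Bool} {l l₁ l₂ : List α}
    {a b : α} (h : l.filter p = l₁ ++ a :: b :: l₂) :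
    ∃ m₁ m m₂, l = m₁ ++ a :: (m ++ b :: m₂) ∧ ∀ x ∈ m, ¬p x := by
  obtain ⟨k₁, k₂, rfl, -, hk₂⟩ := filter_eq_append_iff.mp h
  obtain ⟨n₁, n₂, rfl, -, -, hn₂⟩ := filter_eq_cons_iff.mp hk₂
  obtain ⟨m, m₂, rfl, hm, -, -⟩ := filter_eq_cons_iff.mp hn₂
  exact ⟨k₁ ++ n₁, m, m₂, by simp, hm⟩

theorem exists_isChain_of_mem_listEdges_filter [DecidableEq α]
    {R : α → α → Prop} {p : α → Bool} {l : List α} {a b : α} (hl : l.IsChain R)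
    (h : (a, b) ∈ listEdges (l.filter p)) :
    ∃ m, (a :: (m ++ [b])).IsChain R ∧ p b ∧ ∀ x ∈ m, ¬p x := by
  obtain ⟨l₁, l₂, hfilter⟩ := mem_listEdges_iff.mp h
  have hb : p b := (mem_filter.mp (hfilter ▸ by simp : b ∈ l.filter p)).2
  obtain ⟨m₁, m, m₂, rfl, hm⟩ := exists_eq_append_of_filter_eq_append_cons_cons hfilter
  exact ⟨m, hl.infix ⟨m₁, m₂, by simp⟩, hb, hm⟩

end List

namespace Relator.RightUnique

variable {α : Type*} {R : α → α → Prop}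

/-- Under a right-unique `R` the `R`-walk from `a` is determined by `a`, hence so is the first
vertex on it satisfying `p`. -/
theorem eq_of_isChain_of_forall_not (hR : RightUnique R) {p : α → Prop} {a b b' : α} {m m' : List α}
    (h : (a :: (m ++ [b])).IsChain R) (h' : (a :: (m' ++ [b'])).IsChain R)
    (hb : p b) (hb' : p b') (hm : ∀ x ∈ m, ¬p x) (hm' : ∀ x ∈ m', ¬p x) : b = b' := by
  induction m generalizing a m' with
  | nil =>
    cases m' with
    | nil => exact hR (List.rel_of_isChain_cons_cons h) (List.rel_of_isChain_cons_cons h')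
    | cons y m' =>
      have := hR (List.rel_of_isChain_cons_cons h) (List.rel_of_isChain_cons_cons h')
      exact absurd (this ▸ hb) (hm' y List.mem_cons_self)
  | cons x m ih =>
    cases m' with
    | nil =>
      have := hR (List.rel_of_isChain_cons_cons h') (List.rel_of_isChain_cons_cons h)
      exact absurd (this ▸ hb') (hm x List.mem_cons_self)
    | cons y m' =>
      obtain rfl := hR (List.rel_of_isChain_cons_cons h) (List.rel_of_isChain_cons_cons h')
      exact ih h.tail h'.tail (fun z hz => hm z (List.mem_cons_of_mem x hz))
        (fun z hz => hm' z (List.mem_cons_of_mem x hz))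

theorem eq_of_mem_listEdges_filter [DecidableEq α] (hR : RightUnique R) {p : α → Bool} {l l' : List α}
    (hl : l.IsChain R) (hl' : l'.IsChain R) {a b b' : α}
    (h : (a, b) ∈ listEdges (l.filter p)) (h' : (a, b') ∈ listEdges (l'.filter p)) :
    b = b' := by
  obtain ⟨m, hm, hb, hmp⟩ := List.exists_isChain_of_mem_listEdges_filter hl h
  obtain ⟨m', hm', hb', hmp'⟩ := List.exists_isChain_of_mem_listEdges_filter hl' h'
  exact hR.eq_of_isChain_of_forall_not (p := (p · = true)) hm hm' hb hb' hmp hmp'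

end Relator.RightUnique

theorem forall_outDeg_le_one_iff_rightUnique {H : Finset (V × V)} :
    (∀ v, outDeg H v ≤ 1) ↔ Relator.RightUnique (Adj H) := by
  simp only [outDeg, Finset.card_le_one, Finset.mem_filter, Relator.RightUnique, Adj]
  constructor
  · intro h a b c hb hc
    exact congrArg Prod.snd (h a (a, b) ⟨hb, rfl⟩ (a, c) ⟨hc, rfl⟩)
  · rintro h v ⟨a, b⟩ ⟨hb, rfl⟩ ⟨a', c⟩ ⟨hc, rfl⟩
    rw [h hb hc]

def endpoints (K : Finset (V × V × List V)) : Finset V :=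
  K.image Prod.fst ∪ K.image fun k => k.2.1

theorem mem_endpoints {K : Finset (V × V × List V)} {v : V} :
    v ∈ endpoints K ↔ ∃ k ∈ K, k.1 = v ∨ k.2.1 = v := by
  simp only [endpoints, Finset.mem_union, Finset.mem_image]
  grind

def shortcut (K : Finset (V × V × List V)) (route : V × V × List V → List V) :
    Finset (V × V) :=
  K.biUnion fun k => (listEdges ((route k).filter (· ∈ endpoints K))).toFinset

section Shortcut

variable {D H : Finset (V × V)} {K : Finset (V × V × List V)} {route : V × V × List V → List V}

theorem mem_shortcut {e : V × V} :
    e ∈ shortcut K route ↔ ∃ k ∈ K, e ∈ listEdges ((route k).filter (· ∈ endpoints K)) := by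
  simp [shortcut]

theorem mem_endpoints_of_mem_shortcut {e : V × V} (he : e ∈ shortcut K route) :
    e.1 ∈ endpoints K ∧ e.2 ∈ endpoints K := by
  obtain ⟨k, -, he⟩ := mem_shortcut.mp he
  obtain ⟨l₁, l₂, hfilter⟩ := List.mem_listEdges_iff.mp he
  have hsub : ∀ v ∈ l₁ ++ e.1 :: e.2 :: l₂, v ∈ endpoints K := by
    rw [← hfilter]; intro v hv; simpa using (List.mem_filter.mp hv).2
  exact ⟨hsub _ (by simp), hsub _ (by simp)⟩

theorem tcAdj_of_mem_shortcut (hH : ∀ e ∈ H, TCAdj D e.1 e.2)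
    (hroute : ∀ k ∈ K, DiPath (Adj H) k.1 k.2.1 (route k)) {e : V × V}
    (he : e ∈ shortcut K route) : TCAdj D e.1 e.2 := by
  obtain ⟨k, hk, he⟩ := mem_shortcut.mp he
  obtain ⟨hchain, hnodup, -⟩ := hroute k hk
  have hreach : (route k).IsChain (ReflTransGen (Adj D)) :=
    List.IsChain.imp (fun a b hab => (hH (a, b) hab).2) hchain
  exact ⟨List.ne_of_mem_listEdges (hnodup.filter _) he,
    List.isChain_iff_forall_mem_listEdges.mp (hreach.sublist List.filter_sublist) _ _ he⟩

theorem outDeg_shortcut_le_one (hH : ∀ v, outDeg H v ≤ 1)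
    (hroute : ∀ k ∈ K, (route k).IsChain (Adj H)) (v : V) :
    outDeg (shortcut K route) v ≤ 1 := by
  refine forall_outDeg_le_one_iff_rightUnique.mpr (fun a b b' hb hb' => ?_) v
  obtain ⟨k, hk, hb⟩ := mem_shortcut.mp hb
  obtain ⟨k', hk', hb'⟩ := mem_shortcut.mp hb'
  exact (forall_outDeg_le_one_iff_rightUnique.mp hH).eq_of_mem_listEdges_filter
    (hroute k hk) (hroute k' hk') hb hb'

theorem diPath_shortcut {k : V × V × List V} (hk : k ∈ K)
    (hroute : DiPath (Adj H) k.1 k.2.1 (route k)) :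
    DiPath (Adj (shortcut K route)) k.1 k.2.1 ((route k).filter (· ∈ endpoints K)) := by
  obtain ⟨-, hnodup, hhead, hlast⟩ := hroute
  obtain ⟨l, hl⟩ := List.head?_eq_some_iff.mp hhead
  obtain ⟨l', hl'⟩ := List.getLast?_eq_some_iff.mp hlast
  refine ⟨List.isChain_iff_forall_mem_listEdges.mpr fun a b hab => mem_shortcut.mpr ⟨k, hk, hab⟩,
    hnodup.filter _, ?_, ?_⟩
  · simp [hl, mem_endpoints.mpr ⟨k, hk, Or.inl rfl⟩]
  · simp [hl', mem_endpoints.mpr ⟨k, hk, Or.inr rfl⟩]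

end Shortcut

theorem SPPSolution.exists_shortcut {D H : Finset (V × V)} {K : Finset (V × V × List V)}
    (hH : SPPSolution D K 1 H) :
    ∃ H', SPPSolution D K 1 H' ∧ ∀ e ∈ H', e.1 ∈ endpoints K ∧ e.2 ∈ endpoints K := by
  obtain ⟨hTC, hdeg, hpaths⟩ := hH
  choose! route hroute hsub using hpaths
  refine ⟨shortcut K route, ⟨fun e => tcAdj_of_mem_shortcut hTC hroute,
    outDeg_shortcut_le_one hdeg fun k hk => (hroute k hk).1,
    fun k hk => ⟨_, diPath_shortcut hk (hroute k hk), List.filter_sublist.trans (hsub k hk)⟩⟩,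
    fun e => mem_endpoints_of_mem_shortcut⟩

theorem mdspp_target_one_endpoints_only_general {V : Type*} [DecidableEq V]
    (D : Finset (V × V)) (K : Finset (V × V × List V))
    (hyes : ∃ H : Finset (V × V), SPPSolution D K 1 H) :
    ∃ H : Finset (V × V), SPPSolution D K 1 H ∧
      ∀ v : V, (∃ e ∈ H, e.1 = v ∨ e.2 = v) →
        ∃ k ∈ K, k.1 = v ∨ k.2.1 = v := by
  obtain ⟨H, hH⟩ := hyes
  obtain ⟨H', hH', hends⟩ := hH.exists_shortcut
  refine ⟨H', hH', ?_⟩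
  rintro v ⟨e, he, rfl | rfl⟩
  · exact mem_endpoints.mp (hends e he).1
  · exact mem_endpoints.mp (hends e he).2

/-- If `(D,K,1)` is a YES-instance of MD-SPP with target `1`,
then there is a solution graph `H` of `(D,K,1)` such that every vertex incident
to an edge of `H` is the source or the destination of some routed commodity. -/
theorem mdspp_target_one_endpoints_only {V : Type*} [Fintype V] [DecidableEq V]
    (D : Finset (V × V)) (K : Finset (V × V × List V))
    (hD : IsDigraph D) (hKvalid : ValidSPP D K)
    (hyes : ∃ H : Finset (V × V), SPPSolution D K 1 H) :
    ∃ H : Finset (V × V), SPPSolution D K 1 H ∧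
      ∀ v : V, (∃ e ∈ H, e.1 = v ∨ e.2 = v) →
        ∃ k ∈ K, k.1 = v ∨ k.2.1 = v :=
  mdspp_target_one_endpoints_only_general D K hyes
end

section
/- Let (D,F,K,T) be a YES-instance of SMD-SPP. Then there exists a solution graph H of (D,F,K,T) that contains the edge (v,t) for every flexible vertex v ∈ F and every destination t of a commodity in K such that t ≠ v and t is reachable from v by a directed path in D. -/
open Relation

variable {V : Type*} [DecidableEq V]

/-- `H` is a solution graph of the SMD-SPP instance `(D,F,K,T)`: a subgraph of
`T(D)` such that every vertex outside the flexible set `F` has outdegree at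
most `T`, and every routed commodity `(s,t,P) ∈ K` has a directed `s`-`t`-path
in `H ∩ T(P)`. -/
def SMDSolution (D : Finset (V × V)) (F : Finset V) (K : Finset (V × V × List V))
    (T : ℕ) (H : Finset (V × V)) : Prop :=
  (∀ e ∈ H, TCAdj D e.1 e.2) ∧ (∀ v, v ∉ F → outDeg H v ≤ T) ∧
  (∀ k ∈ K, ∃ l, DiPath (Adj H) k.1 k.2.1 l ∧ l.Sublist k.2.2)

/-- If `(D,F,K,T)` is a YES-instance of SMD-SPP, then there is
a solution graph `H` containing the edge `(v,t)` for every flexible vertex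
`v ∈ F` and every destination `t` of a commodity with `t ≠ v` and `t` reachable
from `v` in `D`. -/
theorem smdspp_solution_with_all_flexible_edges {V : Type*} [Fintype V] [DecidableEq V]
    (D : Finset (V × V)) (F : Finset V) (K : Finset (V × V × List V)) (T : ℕ)
    (hD : IsDigraph D) (hKvalid : ValidSPP D K)
    (hyes : ∃ H : Finset (V × V), SMDSolution D F K T H) :
    ∃ H : Finset (V × V), SMDSolution D F K T H ∧
      ∀ v ∈ F, ∀ k ∈ K, k.2.1 ≠ v → Relation.ReflTransGen (Adj D) v k.2.1 →
        (v, k.2.1) ∈ H := by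
  classical
  obtain ⟨H0, h1, h2, h3⟩ := hyes
  set E' : Finset (V × V) := Finset.univ.filter
    (fun e => e.1 ∈ F ∧ (∃ k ∈ K, k.2.1 = e.2) ∧ e.2 ≠ e.1 ∧
      Relation.ReflTransGen (Adj D) e.1 e.2) with hE'
  refine ⟨H0 ∪ E', ⟨?_, ?_, ?_⟩, ?_⟩
  · intro e he
    rcases Finset.mem_union.mp he with h | h
    · exact h1 e h
    · simp only [hE', Finset.mem_filter] at h
      exact ⟨h.2.2.2.1.symm, h.2.2.2.2⟩
  · intro v hv
    have : outDeg (H0 ∪ E') v ≤ outDeg H0 v := by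
      unfold outDeg
      apply Finset.card_le_card
      intro e he
      simp only [Finset.mem_filter, Finset.mem_union, hE'] at he ⊢
      rcases he.1 with h | h
      · exact ⟨h, he.2⟩
      · exact absurd (he.2 ▸ h.2.1) hv
    exact this.trans (h2 v hv)
  · intro k hk
    obtain ⟨l, ⟨hc, hn, hh, hl⟩, hsub⟩ := h3 k hk
    refine ⟨l, ⟨?_, hn, hh, hl⟩, hsub⟩
    exact hc.imp (fun a b hab => Finset.mem_union_left _ hab)
  · intro v hv k hk hne hr
    apply Finset.mem_union_right
    simp only [hE', Finset.mem_filter]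
    exact ⟨Finset.mem_univ _, hv, ⟨k, hk, rfl⟩, hne, hr⟩
end
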